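/- Let a, b, c, d form a 2×2 quantum matrix in an associative unital ℚ(q)-algebra. Then for all h, f ∈ ℕ: d^f a^h = Σ_{s=0}^{min(h,f)} (−1)^s q^{binom(s+1,2) − s(h+f−s)} (q − q^{−1})^s [h choose s]_q [f choose s]_q [s]_q! · a^{h−s} b^s c^s d^{f−s}. (Identity (4.3), equivalently the relation [D.1] of Theorem 4.6, governing two generators of F_q[M_n] in mutually diagonal position with no corner of the associated rectangle on the main diagonal.) -/

import Mathlib

noncomputable section

open Finset

/-- The field `ℚ(q)` of rational functions over `ℚ`. -/
abbrev 𝕂 : Type := RatFunc ℚ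

/-- The indeterminate `q`. -/
def q : 𝕂 := RatFunc.X

/-- `(n)_q = 1 + q + ⋯ + q^(n-1)`. -/
def qNum (n : ℕ) : 𝕂 := ∑ i ∈ range n, q ^ i

/-- `(n)_q! = ∏_{r=1}^n (r)_q`. -/
def qNumFac (n : ℕ) : 𝕂 := ∏ r ∈ range n, qNum (r + 1)

/-- `(n choose s)_q = (n)_q! / ((s)_q! (n-s)_q!)`. -/
def qNumBinom (n s : ℕ) : 𝕂 := qNumFac n / (qNumFac s * qNumFac (n - s))

/-- `[n]_q = (q^n - q^(-n))/(q - q⁻¹)`. -/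
def qInt (n : ℕ) : 𝕂 := (q ^ n - q⁻¹ ^ n) / (q - q⁻¹)

/-- `[n]_q! = ∏_{r=1}^n [r]_q`. -/
def qIntFac (n : ℕ) : 𝕂 := ∏ r ∈ range n, qInt (r + 1)

/-- `[n choose s]_q = [n]_q! / ([s]_q! [n-s]_q!)`. -/
def qIntBinom (n s : ℕ) : 𝕂 := qIntFac n / (qIntFac s * qIntFac (n - s))

variable {A : Type*} [Ring A] [Algebra 𝕂 A]

/-- The `q`-divided power `X^(n) = X^n / [n]_q!`. -/
def qDiv (X : A) (n : ℕ) : A := (qIntFac n)⁻¹ • X ^ n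

/-- The `q`-binomial coefficient `(X ; c choose n) = ∏_{s=1}^n (q^(c+1-s) X - 1)/(q^s - 1)`. -/
def qBin (X : A) (c : ℤ) (n : ℕ) : A :=
  (∏ s ∈ range n, (q ^ (s + 1) - 1))⁻¹ •
    ((List.range n).map (fun i => (q ^ (c - (i : ℤ)) : 𝕂) • X - 1)).prod

/-- `{X ; c choose n , r} = ∑_{s=0}^r q^(binom(s+1,2)) (r choose s)_q (X ; c+s choose n-r)`. -/
def qBrace (X : A) (c : ℤ) (n r : ℕ) : A :=
  ∑ s ∈ range (r + 1),
    (q ^ ((s + 1).choose 2) * qNumBinom r s : 𝕂) • qBin X (c + s) (n - r)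

/-!
Left multiplication by `d` sends the normally ordered monomial `a^(h-s) b^s c^s d^(f-s)` to a
combination of two such monomials: `d a^n = a^n d - (q - q⁻¹) q^(1-n) [n] a^(n-1) bc`, while
`d` passes `b^s c^s` at the cost of `q^(-2s)` and `bc · b^s c^s = b^(s+1) c^(s+1)`. So the
expansion of `d^f a^h` follows by induction on `f`, once the coefficients satisfy the matching
Pascal-type recurrence in `f`, which comes down to `[f+1] = q^(-(s+1)) [f-s] + q^(f-s) [s+1]`.
-/

theorem q_ne_zero : q ≠ 0 := RatFunc.X_ne_zero

theorem q_pow_ne_one {n : ℕ} (hn : n ≠ 0) : q ^ n ≠ 1 := fun h =>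
  Polynomial.not_isUnit_X <| IsUnit.of_pow_eq_one (RatFunc.algebraMap_injective ℚ <| by
    rwa [map_pow, map_one, RatFunc.algebraMap_X]) hn

theorem q_sub_q_inv_ne_zero : q - q⁻¹ ≠ 0 := by
  intro h
  apply q_pow_ne_one two_ne_zero
  rw [sub_eq_zero] at h
  rw [sq]
  nth_rw 2 [h]
  exact mul_inv_cancel₀ q_ne_zero

theorem qInt_zero : qInt 0 = 0 := by simp [qInt]

theorem qInt_one : qInt 1 = 1 := by simp [qInt, div_self q_sub_q_inv_ne_zero]

theorem qInt_ne_zero {n : ℕ} (hn : n ≠ 0) : qInt n ≠ 0 := by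
  refine div_ne_zero (fun h => q_pow_ne_one (n := 2 * n) (by omega) ?_) q_sub_q_inv_ne_zero
  rw [sub_eq_zero] at h
  rw [pow_mul', sq]
  nth_rw 2 [h]
  rw [inv_pow, mul_inv_cancel₀ (pow_ne_zero _ q_ne_zero)]

theorem qInt_add (m n : ℕ) : qInt (m + n) = q⁻¹ ^ n * qInt m + q ^ m * qInt n := by
  have := q_ne_zero
  have := q_sub_q_inv_ne_zero
  simp only [qInt, inv_pow]
  field_simp
  ring

theorem qIntFac_succ (n : ℕ) : qIntFac (n + 1) = qIntFac n * qInt (n + 1) :=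
  prod_range_succ _ _

theorem qIntFac_ne_zero (n : ℕ) : qIntFac n ≠ 0 :=
  prod_ne_zero_iff.mpr fun _ _ => qInt_ne_zero (Nat.succ_ne_zero _)

def qIntDescFac (n s : ℕ) : 𝕂 := ∏ i ∈ range s, qInt (n - i)

theorem qIntDescFac_succ (n s : ℕ) : qIntDescFac n (s + 1) = qIntDescFac n s * qInt (n - s) :=
  prod_range_succ _ _

theorem qIntDescFac_succ_succ (n s : ℕ) :
    qIntDescFac (n + 1) (s + 1) = qInt (n + 1) * qIntDescFac n s := by
  simp [qIntDescFac, prod_range_succ', mul_comm]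

theorem qIntDescFac_eq_zero_of_lt {n s : ℕ} (h : n < s) : qIntDescFac n s = 0 :=
  prod_eq_zero (mem_range.mpr h) (by simp [qInt_zero])

theorem qIntFac_eq_mul_qIntDescFac {n s : ℕ} (h : s ≤ n) :
    qIntFac n = qIntFac (n - s) * qIntDescFac n s := by
  induction s with
  | zero => simp [qIntDescFac]
  | succ s ih =>
    rw [ih (by omega), qIntDescFac_succ, show n - s = n - (s + 1) + 1 by omega, qIntFac_succ,
      mul_right_comm, mul_assoc]

theorem qIntBinom_mul_qIntFac {n s : ℕ} (h : s ≤ n) :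
    qIntBinom n s * qIntFac s = qIntDescFac n s := by
  rw [qIntBinom, qIntFac_eq_mul_qIntDescFac h]
  field_simp [qIntFac_ne_zero]

def daCoeff (n : ℕ) : 𝕂 := (q - q⁻¹) * q⁻¹ ^ (n - 1) * qInt n

theorem daCoeff_zero : daCoeff 0 = 0 := by simp [daCoeff, qInt_zero]

theorem daCoeff_succ_succ (n : ℕ) :
    daCoeff (n + 2) = daCoeff (n + 1) + (q - q⁻¹) * q⁻¹ ^ (2 * (n + 1)) := by
  have := q_ne_zero
  rw [daCoeff, daCoeff, Nat.add_sub_cancel, show n + 2 - 1 = n + 1 by omega,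
    show n + 2 = 1 + (n + 1) by ring, qInt_add, qInt_one]
  simp only [inv_pow]
  field_simp
  ring

/-- The coefficient in relation [D.1], with `[h choose s]_q [s]_q!` and `[f choose s]_q` written
through `qIntDescFac`, so that it vanishes for `s > min h f` and the expansion of `d ^ f * a ^ h`
may run over `range (f + 1)`. -/
def d1Coeff (h f s : ℕ) : 𝕂 :=
  (-1) ^ s * q ^ ((s + 1).choose 2) * q⁻¹ ^ (s * (h + f - s)) * (q - q⁻¹) ^ s *
    qIntDescFac h s * qIntDescFac f s / qIntFac s

theorem d1Coeff_zero (h f : ℕ) : d1Coeff h f 0 = 1 := by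
  simp [d1Coeff, qIntDescFac, qIntFac]

theorem d1Coeff_eq_zero_of_lt_left {h f s : ℕ} (hs : h < s) : d1Coeff h f s = 0 := by
  simp [d1Coeff, qIntDescFac_eq_zero_of_lt hs]

theorem d1Coeff_eq_zero_of_lt_right {h f s : ℕ} (hs : f < s) : d1Coeff h f s = 0 := by
  simp [d1Coeff, qIntDescFac_eq_zero_of_lt hs]

theorem d1Coeff_succ_succ (h f s : ℕ) :
    d1Coeff h (f + 1) (s + 1) =
      d1Coeff h f (s + 1) * q⁻¹ ^ (2 * (s + 1)) - d1Coeff h f s * daCoeff (h - s) := by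
  rcases le_or_gt h s with hhs | hsh
  · rw [d1Coeff_eq_zero_of_lt_left (by omega), d1Coeff_eq_zero_of_lt_left (by omega),
      Nat.sub_eq_zero_of_le hhs, daCoeff_zero]
    ring
  rcases lt_or_ge f s with hfs | hsf
  · rw [d1Coeff_eq_zero_of_lt_right (by omega), d1Coeff_eq_zero_of_lt_right (by omega),
      d1Coeff_eq_zero_of_lt_right hfs]
    ring
  obtain ⟨j, rfl⟩ : ∃ j, h = s + 1 + j := ⟨h - (s + 1), by omega⟩
  obtain ⟨k, rfl⟩ : ∃ k, f = s + k := ⟨f - s, by omega⟩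
  have := q_ne_zero
  have := qIntFac_ne_zero s
  have := qInt_ne_zero s.succ_ne_zero
  rw [d1Coeff, d1Coeff, d1Coeff, qIntDescFac_succ_succ, qIntDescFac_succ (s + k),
    qIntDescFac_succ (s + 1 + j), qIntFac_succ, daCoeff,
    show s + k + 1 = k + (s + 1) by ring, qInt_add k (s + 1),
    show s + 1 + j + (k + (s + 1)) - (s + 1) = s + 1 + j + k by omega,
    show s + 1 + j + (s + k) - (s + 1) = s + j + k by omega,
    show s + 1 + j + (s + k) - s = s + 1 + j + k by omega,
    show s + k - s = k by omega, show s + 1 + j - s = j + 1 by omega, Nat.add_sub_cancel,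
    Nat.choose_succ_succ (s + 1), Nat.choose_one_right]
  -- `q - q⁻¹` is only a common factor here; kept opaque, `field_simp` does not expand it.
  generalize q - q⁻¹ = r
  simp only [inv_pow]
  field_simp
  ring

theorem d1Coeff_eq {h f s : ℕ} (hh : s ≤ h) (hf : s ≤ f) :
    d1Coeff h f s =
      (-1) ^ s * q ^ ((((s + 1).choose 2 : ℕ) : ℤ) - (s : ℤ) * ((h : ℤ) + (f : ℤ) - (s : ℤ))) *
        (q - q⁻¹) ^ s * qIntBinom h s * qIntBinom f s * qIntFac s := by
  have hexp : (((s + 1).choose 2 : ℕ) : ℤ) - (s : ℤ) * ((h : ℤ) + (f : ℤ) - (s : ℤ)) =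
      (((s + 1).choose 2 : ℕ) : ℤ) - ((s * (h + f - s) : ℕ) : ℤ) := by
    push_cast [Nat.cast_sub (show s ≤ h + f by omega)]
    ring
  rw [hexp, zpow_sub₀ q_ne_zero, zpow_natCast, zpow_natCast, d1Coeff,
    ← qIntBinom_mul_qIntFac hh, ← qIntBinom_mul_qIntFac hf, inv_pow]
  field_simp

theorem Finset.sum_range_succ_smul_of_recurrence {K M : Type*} [CommRing K] [AddCommGroup M]
    [Module K M] {C C' α β : ℕ → K} {m : ℕ → M} (n : ℕ) (h0 : C' 0 = C 0 * β 0)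
    (hsucc : ∀ s, C' (s + 1) = C (s + 1) * β (s + 1) - C s * α s) (hn : C n = 0) :
    ∑ s ∈ range (n + 1), C' s • m s = ∑ s ∈ range n, C s • (β s • m s - α s • m (s + 1)) := by
  calc ∑ s ∈ range (n + 1), C' s • m s
      = ∑ s ∈ range (n + 1), (C s * β s) • m s - ∑ s ∈ range n, (C s * α s) • m (s + 1) := by
        rw [sum_range_succ', sum_range_succ' (fun s => (C s * β s) • m s), h0]
        simp only [hsucc, sub_smul, sum_sub_distrib]
        abel
    _ = _ := by
        rw [sum_range_succ, hn, zero_mul, zero_smul, add_zero]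
        simp only [smul_sub, smul_smul, sum_sub_distrib]

theorem mul_pow_eq_smul_of_mul_eq_smul {R S : Type*} [CommSemiring R] [Semiring S]
    [Algebra R S] {r : R} {x y : S} (h : x * y = r • (y * x)) (n : ℕ) :
    x * y ^ n = r ^ n • (y ^ n * x) := by
  induction n with
  | zero => simp
  | succ n ih =>
    rw [pow_succ, ← mul_assoc, ih, smul_mul_assoc, mul_assoc, h, mul_smul_comm, smul_smul,
      ← pow_succ, ← mul_assoc, ← pow_succ]

theorem mul_eq_inv_smul_of_mul_eq_smul {K S : Type*} [GroupWithZero K] [Mul S] [MulAction K S]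
    {r : K} (hr : r ≠ 0) {x y : S} (h : x * y = r • (y * x)) : y * x = r⁻¹ • (x * y) :=
  (eq_inv_smul_iff₀ hr).mpr h.symm

structure IsQuantumMatrix (a b c d : A) : Prop where
  ab : a * b = q • (b * a)
  ac : a * c = q • (c * a)
  bd : b * d = q • (d * b)
  cd : c * d = q • (d * c)
  bc : b * c = c * b
  ad : a * d - d * a = (q - q⁻¹) • (b * c)

def stdMonomial (a b c d : A) (h f s : ℕ) : A := a ^ (h - s) * b ^ s * c ^ s * d ^ (f - s)

namespace IsQuantumMatrix

variable {a b c d : A} (hM : IsQuantumMatrix a b c d)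
include hM

theorem d_mul_a_pow (n : ℕ) : d * a ^ n = a ^ n * d - daCoeff n • (a ^ (n - 1) * (b * c)) := by
  have hda : d * a = a * d - (q - q⁻¹) • (b * c) := by rw [← hM.ad, sub_sub_cancel]
  have hbca : (b * c) * a = q⁻¹ ^ 2 • (a * (b * c)) := by
    rw [mul_assoc, mul_eq_inv_smul_of_mul_eq_smul q_ne_zero hM.ac, mul_smul_comm, ← mul_assoc,
      mul_eq_inv_smul_of_mul_eq_smul q_ne_zero hM.ab, smul_mul_assoc, smul_smul, ← sq, mul_assoc]
  suffices ∀ n, d * a ^ (n + 1) = a ^ (n + 1) * d - daCoeff (n + 1) • (a ^ n * (b * c)) by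
    cases n with
    | zero => simp [daCoeff_zero]
    | succ n => exact this n
  intro n
  induction n with
  | zero => simpa [daCoeff, qInt_one] using hda
  | succ n ih =>
    rw [pow_succ', ← mul_assoc, hda, sub_mul, mul_assoc, ih, smul_mul_assoc,
      mul_pow_eq_smul_of_mul_eq_smul hbca, daCoeff_succ_succ, ← pow_mul]
    simp only [mul_sub, mul_smul_comm, ← mul_assoc, ← pow_succ']
    rw [smul_smul, add_smul, sub_sub]

theorem d_mul_b_pow_mul_c_pow (s : ℕ) :
    d * (b ^ s * c ^ s) = q⁻¹ ^ (2 * s) • (b ^ s * c ^ s * d) := by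
  have hdb := mul_eq_inv_smul_of_mul_eq_smul q_ne_zero hM.bd
  have hdc := mul_eq_inv_smul_of_mul_eq_smul q_ne_zero hM.cd
  rw [← mul_assoc, mul_pow_eq_smul_of_mul_eq_smul hdb, smul_mul_assoc, mul_assoc,
    mul_pow_eq_smul_of_mul_eq_smul hdc, mul_smul_comm, smul_smul, ← pow_add, two_mul, mul_assoc]

theorem bc_mul_b_pow_mul_c_pow (s : ℕ) :
    (b * c) * (b ^ s * c ^ s) = b ^ (s + 1) * c ^ (s + 1) := by
  rw [mul_assoc, ← mul_assoc c, ((show Commute c b from hM.bc.symm).pow_right s).eq]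
  simp only [mul_assoc, ← pow_succ']
  rw [← mul_assoc, ← pow_succ']

theorem d_mul_stdMonomial {h f s : ℕ} (hs : s ≤ f) :
    d * stdMonomial a b c d h f s =
      q⁻¹ ^ (2 * s) • stdMonomial a b c d h (f + 1) s -
        daCoeff (h - s) • stdMonomial a b c d h (f + 1) (s + 1) := by
  rw [stdMonomial, stdMonomial, stdMonomial, show f + 1 - s = f - s + 1 by omega,
    show f + 1 - (s + 1) = f - s by omega, show h - (s + 1) = h - s - 1 by omega]
  calc d * (a ^ (h - s) * b ^ s * c ^ s * d ^ (f - s))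
      = (d * a ^ (h - s)) * (b ^ s * c ^ s) * d ^ (f - s) := by simp only [mul_assoc]
    _ = a ^ (h - s) * (d * (b ^ s * c ^ s)) * d ^ (f - s) -
          daCoeff (h - s) • (a ^ (h - s - 1) * ((b * c) * (b ^ s * c ^ s)) * d ^ (f - s)) := by
        rw [hM.d_mul_a_pow]
        simp only [sub_mul, smul_mul_assoc, mul_assoc]
    _ = _ := by
        rw [hM.d_mul_b_pow_mul_c_pow, hM.bc_mul_b_pow_mul_c_pow, pow_succ' d]
        simp only [mul_smul_comm, smul_mul_assoc, mul_assoc]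

theorem d_pow_mul_a_pow (h f : ℕ) :
    d ^ f * a ^ h = ∑ s ∈ range (f + 1), d1Coeff h f s • stdMonomial a b c d h f s := by
  induction f with
  | zero => simp [stdMonomial, d1Coeff_zero]
  | succ f ih =>
    calc d ^ (f + 1) * a ^ h = d * (d ^ f * a ^ h) := by rw [pow_succ', mul_assoc]
      _ = ∑ s ∈ range (f + 1), d1Coeff h f s •
            (q⁻¹ ^ (2 * s) • stdMonomial a b c d h (f + 1) s -
              daCoeff (h - s) • stdMonomial a b c d h (f + 1) (s + 1)) := by
        rw [ih, mul_sum]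
        refine sum_congr rfl fun s hs => ?_
        rw [mul_smul_comm, hM.d_mul_stdMonomial (Nat.lt_succ_iff.mp (mem_range.mp hs))]
      _ = _ := (sum_range_succ_smul_of_recurrence (f + 1) (by simp [d1Coeff_zero])
            (d1Coeff_succ_succ h f) (d1Coeff_eq_zero_of_lt_right (Nat.lt_succ_self f))).symm

end IsQuantumMatrix

/-- **Identity (4.3) = relation [D.1] of Theorem 4.6** for a `2×2` quantum matrix. -/
theorem relation_D1 {A : Type*} [Ring A] [Algebra 𝕂 A]
    (a b c d : A)
    (hab : a * b = q • (b * a)) (hac : a * c = q • (c * a))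
    (hbd : b * d = q • (d * b)) (hcd : c * d = q • (d * c))
    (hbc : b * c = c * b)
    (had : a * d - d * a = ((q - q⁻¹ : 𝕂)) • (b * c))
    (h f : ℕ) :
    d ^ f * a ^ h =
      ∑ s ∈ range (min h f + 1),
        ((-1) ^ s *
            q ^ ((((s + 1).choose 2 : ℕ) : ℤ) - (s : ℤ) * ((h : ℤ) + (f : ℤ) - (s : ℤ))) *
            (q - q⁻¹) ^ s * qIntBinom h s * qIntBinom f s * qIntFac s : 𝕂) •
          (a ^ (h - s) * b ^ s * c ^ s * d ^ (f - s)) := by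
  rw [IsQuantumMatrix.d_pow_mul_a_pow ⟨hab, hac, hbd, hcd, hbc, had⟩,
    ← sum_subset (range_subset_range.mpr (Nat.succ_le_succ (min_le_right h f)))]
  · refine sum_congr rfl fun s hs => ?_
    have hs' : s ≤ min h f := Nat.lt_succ_iff.mp (mem_range.mp hs)
    rw [d1Coeff_eq (hs'.trans (min_le_left h f)) (hs'.trans (min_le_right h f)), stdMonomial]
  · intro s hs hs'
    simp only [mem_range] at hs hs'
    rw [d1Coeff_eq_zero_of_lt_left (by omega), zero_smul]

end
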